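/- arXiv:1805.00230 — 2 statements merged into one kernel-verified Lean document; each statement's English description precedes it below -/
import Mathlib

section
/- Let b, c : ℕ → ℝ be sequences with b(0) = c(0) = 1, b(1), c(1) ∈ [−2, 2], satisfying the recurrences b(m+1) = b(1)·b(m) − b(m−1) and c(m+1) = c(1)·c(m) − c(m−1) for all m ≥ 1. Then there exist infinitely many m ∈ ℕ with b(m)·c(m) ≠ 0. -/
/-- No two consecutive zeros for a sequence satisfying the Hecke recurrence
with `b 0 = 1`. -/
lemma hecke_no_consec_zero (b : ℕ → ℝ) (hb0 : b 0 = 1)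
    (hbrec : ∀ m, 1 ≤ m → b (m + 1) = b 1 * b m - b (m - 1)) :
    ∀ m, b m = 0 → b (m + 1) = 0 → False := by
  intro m
  induction m with
  | zero => intro h _; rw [hb0] at h; norm_num at h
  | succ m ih =>
    intro hm hm1
    have hr := hbrec (m + 1) (by omega)
    simp only [Nat.add_sub_cancel] at hr
    have hbm : b m = 0 := by
      rw [hm1, hm] at hr
      linarith
    exact ih hbm hm

/-- Shift lemma: if `b k = 0` for `k ≥ 1`, then `b (k + j + 1) = b (k+1) * b j`. -/
lemma hecke_shift (b : ℕ → ℝ) (hb0 : b 0 = 1)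
    (hbrec : ∀ m, 1 ≤ m → b (m + 1) = b 1 * b m - b (m - 1))
    (k : ℕ) (hk1 : 1 ≤ k) (hk : b k = 0) :
    ∀ j, b (k + j + 1) = b (k + 1) * b j := by
  have key : ∀ j, b (k + j + 1) = b (k + 1) * b j ∧
      b (k + j + 2) = b (k + 1) * b (j + 1) := by
    intro j
    induction j with
    | zero =>
      constructor
      · simp [hb0]
      · have hr := hbrec (k + 1) (by omega)
        simp only [Nat.add_sub_cancel] at hr
        rw [hr, hk]
        ring
    | succ j ih =>
      obtain ⟨h1, h2⟩ := ih
      refine ⟨h2, ?_⟩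
      have hr := hbrec (k + j + 2) (by omega)
      rw [show k + j + 2 - 1 = k + j + 1 by omega] at hr
      have hr2 := hbrec (j + 1) (by omega)
      simp only [Nat.add_sub_cancel] at hr2
      show b (k + j + 2 + 1) = b (k + 1) * b (j + 1 + 1)
      rw [hr, h1, h2, hr2]
      ring
  exact fun j => (key j).1

/-- Zero-set structure: there is `q ≥ 2` such that every zero index `m`
satisfies `q ∣ m + 1`. -/
lemma hecke_zero_dvd (b : ℕ → ℝ) (hb0 : b 0 = 1)
    (hbrec : ∀ m, 1 ≤ m → b (m + 1) = b 1 * b m - b (m - 1)) :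
    ∃ q, 2 ≤ q ∧ ∀ m, b m = 0 → q ∣ m + 1 := by
  by_cases hex : ∃ k, b k = 0
  · set k := Nat.find hex with hkdef
    have hk : b k = 0 := Nat.find_spec hex
    have hmin : ∀ j, j < k → b j ≠ 0 := fun j hj => Nat.find_min hex hj
    have hk1 : 1 ≤ k := by
      rcases Nat.eq_zero_or_pos k with h | h
      · rw [h, hb0] at hk; norm_num at hk
      · exact h
    have hknz : b (k + 1) ≠ 0 := fun h =>
      hecke_no_consec_zero b hb0 hbrec k hk h
    refine ⟨k + 1, by omega, ?_⟩
    intro m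
    induction m using Nat.strong_induction_on with
    | _ m ih =>
      intro hm
      have hmk : k ≤ m := by
        by_contra h
        exact hmin m (by omega) hm
      rcases Nat.eq_or_lt_of_le hmk with h | h
      · rw [h]
      · set j := m - k - 1 with hj
        have hmj : m = k + j + 1 := by omega
        have hsh := hecke_shift b hb0 hbrec k hk1 hk j
        rw [← hmj] at hsh
        have hbj : b j = 0 := by
          rw [hm] at hsh
          rcases mul_eq_zero.mp hsh.symm with h' | h'
          · exact absurd h' hknz
          · exact h'
        have hd := ih j (by omega) hbj
        have : m + 1 = (j + 1) + (k + 1) := by omega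
        rw [this]
        exact dvd_add hd dvd_rfl
  · exact ⟨2, le_refl 2, fun m hm => absurd ⟨m, hm⟩ hex⟩

/-- Corollary (abstracted): for two sequences satisfying the normalized Hecke
recurrence with initial values in `[-2, 2]`, there are infinitely many indices
of simultaneous non-vanishing. -/
theorem simultaneous_nonvanishing_infinite
    (b c : ℕ → ℝ) (hb0 : b 0 = 1) (hc0 : c 0 = 1)
    (hb1 : b 1 ∈ Set.Icc (-2 : ℝ) 2) (hc1 : c 1 ∈ Set.Icc (-2 : ℝ) 2)
    (hbrec : ∀ m, 1 ≤ m → b (m + 1) = b 1 * b m - b (m - 1))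
    (hcrec : ∀ m, 1 ≤ m → c (m + 1) = c 1 * c m - c (m - 1)) :
    {m : ℕ | b m * c m ≠ 0}.Infinite := by
  obtain ⟨p, hp2, hpdvd⟩ := hecke_zero_dvd b hb0 hbrec
  obtain ⟨q, hq2, hqdvd⟩ := hecke_zero_dvd c hc0 hcrec
  apply Set.infinite_of_forall_exists_gt
  intro N
  refine ⟨p * q * (N + 1), ?_, ?_⟩
  · simp only [Set.mem_setOf_eq]
    apply mul_ne_zero
    · intro h
      have hd := hpdvd _ h
      have hp1 : p ∣ p * q * (N + 1) := ⟨q * (N + 1), by ring⟩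
      have : p ∣ 1 := (Nat.dvd_add_right hp1).mp hd
      have := Nat.le_of_dvd one_pos this
      omega
    · intro h
      have hd := hqdvd _ h
      have hq1 : q ∣ p * q * (N + 1) := ⟨p * (N + 1), by ring⟩
      have : q ∣ 1 := (Nat.dvd_add_right hq1).mp hd
      have := Nat.le_of_dvd one_pos this
      omega
  · calc N < N + 1 := by omega
      _ ≤ p * q * (N + 1) := Nat.le_mul_of_pos_left _ (by positivity)
end

section
/- Let b : ℕ → ℝ be a sequence with b(0) = 1, b(1) ∈ [−2, 2], satisfying the recurrence b(m+1) = b(1)·b(m) − b(m−1) for all m ≥ 1. Then either b(m) ≠ 0 for all m ≥ 0, or there exists an integer s ≥ 2 such that for all m ≥ 0, b(m) = 0 if and only if s divides m + 1. -/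
/-- Vanishing set description: a sequence satisfying the normalized Hecke
recurrence with initial value in `[-2, 2]` either never vanishes, or its
vanishing set is `{m : s ∣ m + 1}` for some integer `s ≥ 2`. -/
theorem hecke_recurrence_vanishing_set
    (b : ℕ → ℝ) (hb0 : b 0 = 1) (hb1 : b 1 ∈ Set.Icc (-2 : ℝ) 2)
    (hrec : ∀ m, 1 ≤ m → b (m + 1) = b 1 * b m - b (m - 1)) :
    (∀ m : ℕ, b m ≠ 0) ∨
      ∃ s : ℕ, 2 ≤ s ∧ ∀ m : ℕ, (b m = 0 ↔ s ∣ (m + 1)) := by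
  by_cases h : ∀ m : ℕ, b m ≠ 0
  · exact Or.inl h
  push_neg at h
  right
  classical
  set m0 := Nat.find h with hm0def
  have hm0 : b m0 = 0 := Nat.find_spec h
  have hmin : ∀ k < m0, b k ≠ 0 := fun k hk => Nat.find_min h hk
  have hm0pos : 1 ≤ m0 := by
    rcases Nat.eq_zero_or_pos m0 with h0 | h0
    · exfalso; rw [h0, hb0] at hm0; norm_num at hm0
    · exact h0
  set s := m0 + 1 with hs
  set c := -b (m0 - 1) with hc
  have hcne : c ≠ 0 := by
    simp only [hc, neg_ne_zero]
    exact hmin _ (Nat.sub_lt hm0pos one_pos)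
  have key : ∀ k, b (s + k) = c * b k ∧ b (s + k + 1) = c * b (k + 1) := by
    intro k
    induction k with
    | zero =>
      have h1 : b s = c := by
        have h2 := hrec m0 hm0pos
        rw [hm0] at h2
        simpa [hs, hc] using h2
      constructor
      · simpa [hb0] using h1
      · have h2 := hrec s (by omega)
        have hsub : s - 1 = m0 := by omega
        rw [hsub, hm0] at h2
        rw [h2, h1]; ring
    | succ k ih =>
      obtain ⟨ih1, ih2⟩ := ih
      refine ⟨ih2, ?_⟩
      have h3 := hrec (s + k + 1) (by omega)
      have hsub : s + k + 1 - 1 = s + k := rfl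
      rw [hsub, ih1, ih2] at h3
      have h4 := hrec (k + 1) (by omega)
      have hk1 : k + 1 - 1 = k := rfl
      rw [hk1] at h4
      have heq : s + (k + 1) + 1 = s + k + 1 + 1 := by ring
      rw [heq, h3, h4]; ring
  refine ⟨s, by omega, ?_⟩
  intro n
  induction n using Nat.strong_induction_on with
  | _ n ih =>
    rcases lt_trichotomy n m0 with hlt | heq | hgt
    · constructor
      · intro h0; exact absurd h0 (hmin n hlt)
      · intro hdvd
        exfalso
        have := Nat.le_of_dvd (by omega) hdvd
        omega
    · subst heq
      simp [hm0, hs]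
    · have hn : s + (n - s) = n := by omega
      have hk := (key (n - s)).1
      rw [hn] at hk
      rw [hk]
      constructor
      · intro h0
        have hb : b (n - s) = 0 := by
          rcases mul_eq_zero.mp h0 with h' | h'
          · exact absurd h' hcne
          · exact h'
        obtain ⟨t, ht⟩ := (ih (n - s) (by omega)).mp hb
        refine ⟨t + 1, ?_⟩
        have h5 : s * (t + 1) = s * t + s := by ring
        omega
      · intro hdvd
        obtain ⟨t, ht⟩ := hdvd
        have ht1 : 1 ≤ t := by
          rcases Nat.eq_zero_or_pos t with h0 | h0
          · rw [h0, Nat.mul_zero] at ht; omega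
          · exact h0
        have h5 : s * t = s * (t - 1) + s := by
          have h6 : t - 1 + 1 = t := by omega
          calc s * t = s * (t - 1 + 1) := by rw [h6]
            _ = s * (t - 1) + s := by ring
        have hd : s ∣ (n - s + 1) := ⟨t - 1, by omega⟩
        rw [(ih (n - s) (by omega)).mpr hd]
        ring
end
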